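/- Let ℓ be a central line, i.e., a line in ℝ³ with direction (0,1,0) passing through a point P₀ = (a, b, c) with (a,c) ≠ (0,0). Then the image of ℓ under the total spherical perspective map p is contained in the fixed open ray {t·(a,c)/√(a²+c²) : t ∈ (0,π)} from the origin, and as the parameter along ℓ tends to +∞ the image tends to the origin (the image of F), while as it tends to −∞ the norm of the image tends to π (the blowup of B). -/

import Mathlib

open scoped RealInnerProductSpace

noncomputable section

abbrev E3 := EuclideanSpace ℝ (Fin 3)
abbrev E2 := EuclideanSpace ℝ (Fin 2)

/-- The vector (a, b) in euclidean ℝ². -/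
def vec2 (a b : ℝ) : E2 := (WithLp.equiv 2 (Fin 2 → ℝ)).symm ![a, b]

/-- The vector (a, b, c) in euclidean ℝ³. -/
def vec3 (a b c : ℝ) : E3 := (WithLp.equiv 2 (Fin 3 → ℝ)).symm ![a, b, c]

/-- The total spherical perspective map: p(x,y,z) = arccos(y/‖P‖) · (x,z)/√(x²+z²). -/
def persp (P : E3) : E2 :=
  (Real.arccos (P 1 / ‖P‖) / Real.sqrt ((P 0) ^ 2 + (P 2) ^ 2)) • vec2 (P 0) (P 2)

/-- The front point F = (0,1,0). -/
def Fpt : E3 := vec3 0 1 0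

/-- The back point B = (0,-1,0). -/
def Bpt : E3 := vec3 0 (-1) 0

/-! Along a central line x and z are fixed, so `p` is `arccos (y / ‖P‖)` times the fixed unit
vector `(x, z) / √(x² + z²)`. Since `x² + z² > 0`, `y / ‖P‖` lies strictly between `-1`
and `1`, and it tends to `±1` as `y → ±∞`. -/

open Filter Real Topology

lemma norm_vec2 (a c : ℝ) : ‖vec2 a c‖ = √(a ^ 2 + c ^ 2) := by
  simp [vec2, EuclideanSpace.norm_eq, Fin.sum_univ_two, sq_abs]

lemma norm_vec3 (a y c : ℝ) : ‖vec3 a y c‖ = √(a ^ 2 + c ^ 2 + y ^ 2) := by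
  simp only [vec3, EuclideanSpace.norm_eq, Real.norm_eq_abs, sq_abs, Fin.sum_univ_three]
  simp [add_right_comm]

lemma persp_vec3 (a y c : ℝ) :
    persp (vec3 a y c) =
      arccos (y / √(a ^ 2 + c ^ 2 + y ^ 2)) • ((√(a ^ 2 + c ^ 2))⁻¹ • vec2 a c) := by
  rw [smul_smul, ← div_eq_mul_inv, ← norm_vec3]
  rfl

lemma abs_div_sqrt_add_sq_lt_one {k : ℝ} (hk : 0 < k) (y : ℝ) : |y / √(k + y ^ 2)| < 1 := by
  have hy : |y| < √(k + y ^ 2) := by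
    rw [← sqrt_sq_eq_abs]
    exact sqrt_lt_sqrt (sq_nonneg y) (by linarith)
  rw [abs_div, abs_of_pos ((abs_nonneg y).trans_lt hy), div_lt_one ((abs_nonneg y).trans_lt hy)]
  exact hy

lemma arccos_mem_Ioo_of_abs_lt_one {x : ℝ} (hx : |x| < 1) : arccos x ∈ Set.Ioo 0 π :=
  ⟨arccos_pos.2 (abs_lt.1 hx).2, arccos_lt_pi.2 (abs_lt.1 hx).1⟩

lemma tendsto_div_sqrt_add_sq_atTop (k : ℝ) :
    Tendsto (fun y => y / √(k + y ^ 2)) atTop (𝓝 1) := by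
  have hsqrt : Tendsto (fun y : ℝ => √(k / y ^ 2 + 1)) atTop (𝓝 1) := by
    have hinv : Tendsto (fun y : ℝ => k / y ^ 2) atTop (𝓝 0) := by
      simpa [div_eq_mul_inv] using (tendsto_pow_atTop two_ne_zero).inv_tendsto_atTop.const_mul k
    simpa [Function.comp_def] using
      (continuous_sqrt.tendsto 1).comp (by simpa using hinv.add_const 1)
  have hinv : Tendsto (fun y : ℝ => (√(k / y ^ 2 + 1))⁻¹) atTop (𝓝 1) := by
    simpa using hsqrt.inv₀ one_ne_zero
  refine hinv.congr' ?_
  filter_upwards [eventually_gt_atTop 0] with y hy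
  have hfactor : k + y ^ 2 = y ^ 2 * (k / y ^ 2 + 1) := by field_simp
  rw [hfactor, sqrt_mul (sq_nonneg y), sqrt_sq hy.le, div_mul_cancel_left₀ hy.ne']

lemma tendsto_div_sqrt_add_sq_atBot (k : ℝ) :
    Tendsto (fun y => y / √(k + y ^ 2)) atBot (𝓝 (-1)) := by
  have := ((tendsto_div_sqrt_add_sq_atTop k).neg).comp tendsto_neg_atBot_atTop
  simpa [Function.comp_def, neg_div] using this

lemma tendsto_arccos_div_sqrt_add_sq_atTop (k : ℝ) :
    Tendsto (fun y => arccos (y / √(k + y ^ 2))) atTop (𝓝 0) :=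
  (continuous_arccos.tendsto' 1 0 arccos_one).comp (tendsto_div_sqrt_add_sq_atTop k)

lemma tendsto_arccos_div_sqrt_add_sq_atBot (k : ℝ) :
    Tendsto (fun y => arccos (y / √(k + y ^ 2))) atBot (𝓝 π) :=
  (continuous_arccos.tendsto' (-1) π arccos_neg_one).comp (tendsto_div_sqrt_add_sq_atBot k)

/-- a central line t ↦ (a, b + t, c) with (a,c) ≠ (0,0) maps into the fixed open
ray {s·(a,c)/√(a²+c²) : s ∈ (0,π)}; as t → +∞ the image tends to the origin (image of F), and
as t → -∞ the norm of the image tends to π (the blowup of B). -/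
theorem stmt14 (a b c : ℝ) (h : a ≠ 0 ∨ c ≠ 0) :
    (∀ t : ℝ, ∃ s ∈ Set.Ioo 0 Real.pi,
      persp (vec3 a (b + t) c) = s • ((Real.sqrt (a ^ 2 + c ^ 2))⁻¹ • vec2 a c)) ∧
    Filter.Tendsto (fun t => persp (vec3 a (b + t) c)) Filter.atTop (nhds 0) ∧
    Filter.Tendsto (fun t => ‖persp (vec3 a (b + t) c)‖) Filter.atBot (nhds Real.pi) := by
  have hk : 0 < a ^ 2 + c ^ 2 := by rcases h with h | h <;> positivity
  have hu : ‖(√(a ^ 2 + c ^ 2))⁻¹ • vec2 a c‖ = 1 := by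
    rw [norm_smul, norm_vec2, norm_inv, norm_of_nonneg (sqrt_nonneg _),
      inv_mul_cancel₀ (sqrt_pos.2 hk).ne']
  have hIoo (y : ℝ) := arccos_mem_Ioo_of_abs_lt_one (abs_div_sqrt_add_sq_lt_one hk y)
  simp_rw [persp_vec3, norm_smul _ ((√(a ^ 2 + c ^ 2))⁻¹ • vec2 a c), hu, mul_one,
    norm_of_nonneg (hIoo _).1.le]
  refine ⟨fun t => ⟨_, hIoo (b + t), rfl⟩, ?_, ?_⟩
  · simpa using ((tendsto_arccos_div_sqrt_add_sq_atTop (a ^ 2 + c ^ 2)).comp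
      (tendsto_atTop_add_const_left _ b tendsto_id)).smul_const
        ((√(a ^ 2 + c ^ 2))⁻¹ • vec2 a c)
  · exact (tendsto_arccos_div_sqrt_add_sq_atBot _).comp
      (tendsto_atBot_add_const_left _ b tendsto_id)
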